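/- In the setting of the proof of Theorem 4.3, with M given near p₁ = 0 by y = h(w, w̄, x) (h real analytic, h(0) = 0, dh(0) = 0, h(w, 0, x) ≡ 0) and D = M⁻ = {y < h(w, w̄, x)}, let H₁ be a C^∞ hypersurface transverse to M at 0 with H₁ ∩ M = M₁ and H₁⁻ ∩ M = M₁⁻. If the Segre variety S_{0̄} of the origin satisfies S_{0̄} ∩ H₁⁻ ⊂ M⁺ (i.e. S_{0̄} lies above M near M₁⁻), then the origin 0 lies in the lower side Σ_{γ_{w_q,x_q}}⁻ of the Levi-flat hypersurface Σ_{γ_{w_q,x_q}} for every arc γ_{w_q,x_q} ⊂⊂ M₁⁻. -/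
import Mathlib


/-!
Common definitions: CR geometry of real analytic hypersurfaces in `ℂⁿ`,
following J. Merker, "On envelopes of holomorphy of domains with Levi-flat
hats and the reflection principle".

We model `ℂⁿ` with `n = m + 1` as `CS m := (Fin m → ℂ) × ℂ`, with coordinates
`t = (w, z)`; the sup-norm balls of this product are polydiscs.
-/

noncomputable section

open Complex Topology Filter Metric Set

abbrev CS (m : ℕ) : Type := (Fin m → ℂ) × ℂ

section Basic

variable {E F : Type*} [NormedAddCommGroup E] [NormedSpace ℂ E]
  [NormedAddCommGroup F] [NormedSpace ℂ F]

/-- `v` is a real tangent vector to the set `M` at `q`: every real-differentiable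
function vanishing on `M` near `q` has differential annihilating `v`. -/
def TangentAt (M : Set E) (q v : E) : Prop :=
  ∀ ρ : E → ℝ, DifferentiableAt ℝ ρ q → (∀ᶠ z in 𝓝 q, z ∈ M → ρ z = 0) →
    fderiv ℝ ρ q v = 0

/-- `v` is a complex tangent vector to `M` at `q` (i.e. `v ∈ T^c_q M`). -/
def ComplexTangentAt (M : Set E) (q v : E) : Prop :=
  TangentAt M q v ∧ TangentAt M q (Complex.I • v)

/-- `M` is a real analytic real hypersurface: near each of its points it is the
zero set of a real analytic real-valued function with nonvanishing differential. -/
def IsRealAnalyticHypersurface (M : Set E) : Prop :=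
  M.Nonempty ∧ ∀ p ∈ M, ∃ (U : Set E) (ρ : E → ℝ), IsOpen U ∧ p ∈ U ∧
    AnalyticOnNhd ℝ ρ U ∧ fderiv ℝ ρ p ≠ 0 ∧ M ∩ U = {z ∈ U | ρ z = 0}

/-- A set `N ⊆ E` is generic in `E`: `T_q N + i T_q N = E` at each `q ∈ N`. -/
def IsGenericSet (N : Set E) : Prop :=
  ∀ q ∈ N, ∀ v : E, ∃ a b : E, TangentAt N q a ∧ TangentAt N q b ∧
    v = a + Complex.I • b

/-- The antiholomorphic part `∂̄f(q)(v)` of the real differential of `f` at `q`. -/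
def antiCDeriv (f : E → ℂ) (q v : E) : ℂ :=
  (fderiv ℝ f q v + Complex.I * fderiv ℝ f q (Complex.I • v)) / 2

/-- `f` is a CR function of class `C^k` on the hypersurface `M`: locally it has
`C^k` extensions whose antiholomorphic differential annihilates the complex
tangent spaces of `M`. -/
def IsCRFunctionOn (k : ℕ∞) (M : Set E) (f : E → ℂ) : Prop :=
  ∀ p ∈ M, ∃ (U : Set E) (g : E → ℂ), IsOpen U ∧ p ∈ U ∧
    ContDiffOn ℝ k g U ∧ (∀ z ∈ M ∩ U, g z = f z) ∧
    ∀ q ∈ M ∩ U, ∀ v : E, ComplexTangentAt M q v → antiCDeriv g q v = 0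

/-- `h` is a CR mapping of class `C^k` from `M` to `M'`. -/
def IsCRMapOn (k : ℕ∞) (M : Set E) (M' : Set F) (h : E → F) : Prop :=
  Set.MapsTo h M M' ∧ ∀ ℓ : F →L[ℂ] ℂ, IsCRFunctionOn k M fun z => ℓ (h z)

/-- `h` is a CR diffeomorphism of class `C^k` from `M` onto `M'`. -/
def IsCRDiffeoOn (k : ℕ∞) (M : Set E) (M' : Set F) (h : E → F) : Prop :=
  IsCRMapOn k M M' h ∧ Set.BijOn h M M' ∧
    ∃ g : F → E, IsCRMapOn k M' M g ∧ ∀ z ∈ M, g (h z) = z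

/-- `f` is a CR function of class `C^{1,α}` on `M`. -/
def IsCRFunctionC1HolderOn (α : NNReal) (M : Set E) (f : E → ℂ) : Prop :=
  ∀ p ∈ M, ∃ (U : Set E) (g : E → ℂ), IsOpen U ∧ p ∈ U ∧
    ContDiffOn ℝ 1 g U ∧
    (∃ C : NNReal, HolderOnWith C α (fderivWithin ℝ g U) U) ∧
    (∀ z ∈ M ∩ U, g z = f z) ∧
    ∀ q ∈ M ∩ U, ∀ v : E, ComplexTangentAt M q v → antiCDeriv g q v = 0

/-- `h` is a CR mapping of class `C^{1,α}` from `M` to `M'`. -/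
def IsCRMapC1HolderOn (α : NNReal) (M : Set E) (M' : Set F) (h : E → F) : Prop :=
  Set.MapsTo h M M' ∧ ∀ ℓ : F →L[ℂ] ℂ, IsCRFunctionC1HolderOn α M fun z => ℓ (h z)

/-- `h` is a CR diffeomorphism of class `C^{1,α}` from `M` onto `M'`. -/
def IsCRDiffeoC1HolderOn (α : NNReal) (M : Set E) (M' : Set F) (h : E → F) : Prop :=
  IsCRMapC1HolderOn α M M' h ∧ Set.BijOn h M M' ∧
    ∃ g : F → E, IsCRMapC1HolderOn α M' M g ∧ ∀ z ∈ M, g (h z) = z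

/-- There is a germ of a (possibly singular) complex hypersurface through `q`
contained in `M`. -/
def HasComplexHypersurfaceGermIn (M : Set E) (q : E) : Prop :=
  ∃ (U : Set E) (f : E → ℂ), IsOpen U ∧ q ∈ U ∧ DifferentiableOn ℂ f U ∧
    f q = 0 ∧ ¬ (∀ᶠ z in 𝓝 q, f z = 0) ∧ {z ∈ U | f z = 0} ⊆ M

/-- `M` is minimal in the sense of Tumanov at `q`: no germ of a complex
hypersurface through `q` is contained in `M`. -/
def MinimalAt (M : Set E) (q : E) : Prop := ¬ HasComplexHypersurfaceGermIn M q

/-- `M` is holomorphically nondegenerate: there is no holomorphic vector field,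
defined and not identically zero near some point of `M`, tangent to `M`. -/
def HolomorphicallyNondegenerate (M : Set E) : Prop :=
  ¬ ∃ (U : Set E) (X : E → E) (q : E), IsOpen U ∧ q ∈ M ∩ U ∧
      DifferentiableOn ℂ X U ∧ ¬ (∀ᶠ z in 𝓝 q, X z = 0) ∧
      ∀ z ∈ M ∩ U, ComplexTangentAt M z (X z)

/-- There exist `d` holomorphic vector fields tangent to `M`, defined near some
point of `M` and linearly independent at that (generic) point. -/
def HolDegDegreeGE (M : Set E) (d : ℕ) : Prop :=
  ∃ (U : Set E) (X : Fin d → E → E) (q : E), IsOpen U ∧ q ∈ M ∩ U ∧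
    (∀ i, DifferentiableOn ℂ (X i) U) ∧
    (∀ i, ∀ z ∈ M ∩ U, ComplexTangentAt M z (X i z)) ∧
    LinearIndependent ℂ fun i => X i q

/-- The holomorphic degeneracy degree of `M` equals `κ`. -/
def HolDegDegree (M : Set E) (κ : ℕ) : Prop :=
  HolDegDegreeGE M κ ∧ ¬ HolDegDegreeGE M (κ + 1)

/-- Near `b`, the set `A` is a complex submanifold of complex codimension `c`. -/
def IsComplexSubmanifoldAt (A : Set E) (b : E) (c : ℕ) : Prop :=
  ∃ (W : Set E) (f : E → Fin c → ℂ), IsOpen W ∧ b ∈ W ∧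
    DifferentiableOn ℂ f W ∧ A ∩ W = {z ∈ W | f z = 0} ∧
    Function.Surjective ⇑(fderiv ℂ f b)

/-- `A` is a closed complex analytic subset of the open set `Ω`. -/
def IsAnalyticSubsetOf (Ω A : Set E) : Prop :=
  A ⊆ Ω ∧ closure A ∩ Ω ⊆ A ∧
    ∀ a ∈ Ω, ∃ (W : Set E) (N : ℕ) (f : E → Fin N → ℂ), IsOpen W ∧ a ∈ W ∧
      W ⊆ Ω ∧ DifferentiableOn ℂ f W ∧ A ∩ W = {z ∈ W | f z = 0}

/-- `A` is a complex analytic subset of `Ω` of pure complex codimension `c`: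
its regular points are dense in it, and they all have codimension `c`. -/
def IsPureCodimAnalyticSubsetOf (Ω A : Set E) (c : ℕ) : Prop :=
  IsAnalyticSubsetOf Ω A ∧
  (∀ a ∈ A, ∀ V ∈ 𝓝 a, ∃ b ∈ A ∩ V, IsComplexSubmanifoldAt A b c) ∧
  (∀ b ∈ A, ∀ c' : ℕ, IsComplexSubmanifoldAt A b c' → c' = c)

/-- `S` is a `C^∞`-smooth real hypersurface of the open set `Ω`. -/
def IsSmoothHypersurfaceIn (Ω S : Set E) : Prop :=
  S ⊆ Ω ∧ ∀ q ∈ S, ∃ (U : Set E) (ρ : E → ℝ), IsOpen U ∧ q ∈ U ∧ U ⊆ Ω ∧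
    ContDiffOn ℝ (⊤ : ℕ∞) ρ U ∧ (∀ z ∈ U, fderiv ℝ ρ z ≠ 0) ∧
    S ∩ U = {z ∈ U | ρ z = 0}

/-- A smooth real hypersurface is Levi-flat iff it is foliated by complex
hypersurfaces, i.e. through each of its points there passes a germ of a
complex hypersurface contained in it. -/
def IsLeviFlat (S : Set E) : Prop :=
  ∀ q ∈ S, HasComplexHypersurfaceGermIn S q

/-- `f` is of class `C^{1,β}` on `s`. -/
def IsC1HolderOn {X Y : Type*} [NormedAddCommGroup X] [NormedSpace ℝ X]
    [NormedAddCommGroup Y] [NormedSpace ℝ Y] (β : NNReal) (f : X → Y)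
    (s : Set X) : Prop :=
  ContDiffOn ℝ 1 f s ∧ ∃ C : NNReal, HolderOnWith C β (fderivWithin ℝ f s) s

/-- A continuous CR function on a smooth hypersurface `S`: continuous on `S`
and locally a uniform limit on `S` of holomorphic functions
(Baouendi–Trèves characterization). -/
def ContinuousCRFunctionOn (S : Set E) (ψ : E → ℂ) : Prop :=
  ContinuousOn ψ S ∧ ∀ p ∈ S, ∃ U : Set E, IsOpen U ∧ p ∈ U ∧
    ∃ Fs : ℕ → E → ℂ, (∀ k, DifferentiableOn ℂ (Fs k) U) ∧
      TendstoUniformlyOn (fun k => Fs k) ψ atTop (S ∩ U)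

end Basic

section Series

variable {m : ℕ}

/-- Total degree of a multiindex `β ∈ ℕ^m`. -/
def mdeg (β : Fin m → ℕ) : ℕ := ∑ i, β i

/-- Monomial `w^β`. -/
def mpow (w : Fin m → ℂ) (β : Fin m → ℕ) : ℂ := ∏ i, w i ^ β i

/-- Componentwise conjugation of `w ∈ ℂ^m`. -/
def conjW (w : Fin m → ℂ) : Fin m → ℂ := fun i => starRingEnd ℂ (w i)

/-- Componentwise conjugation on `ℂ^{m+1}`. -/
def conjCS (t : CS m) : CS m := (conjW t.1, starRingEnd ℂ t.2)

/-- The series `Θ(ζ, t) = Σ_β ζ^β Θ_β(t)`. -/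
def ThetaSum (Θ : (Fin m → ℕ) → CS m → ℂ) (ζ : Fin m → ℂ) (t : CS m) : ℂ :=
  ∑' β : Fin m → ℕ, mpow ζ β * Θ β t

/-- The conjugate series `Θ̄(w, τ) = Σ_β w^β conj(Θ_β(τ̄))`. -/
def ThetaBar (Θ : (Fin m → ℕ) → CS m → ℂ) (w : Fin m → ℂ) (τ : CS m) : ℂ :=
  ∑' β : Fin m → ℕ, mpow w β * starRingEnd ℂ (Θ β (conjCS τ))

/-- Defining data for a hypersurface through `0`: a family of coefficient
functions `Θ_β`, a radius `r` and a constant `C`. -/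
structure DefData (m : ℕ) where
  Θ : (Fin m → ℕ) → CS m → ℂ
  r : ℝ
  C : ℝ

/-- `d` is a normally convergent complex defining series for `M` near the
origin, i.e. in suitable holomorphic coordinates vanishing at the reference
point, `M = {(w, z) : z̄ = Θ(w̄, (w, z)) = Σ_β w̄^β Θ_β(w, z)}`, where the
coefficients are holomorphic on the polydisc of radius `2r` and satisfy the
normal-convergence Cauchy estimates `|Θ_β| ≤ C / (2r)^{|β|}` there, and the
series vanishes at the origin. -/
def DefData.IsDefiningSeriesOf (d : DefData m) (M : Set (CS m)) : Prop :=
  0 < d.r ∧ 0 < d.C ∧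
  (∀ β, DifferentiableOn ℂ (d.Θ β) (ball (0 : CS m) (2 * d.r))) ∧
  (∀ β, ∀ t ∈ ball (0 : CS m) (2 * d.r), ‖d.Θ β t‖ ≤ d.C / (2 * d.r) ^ mdeg β) ∧
  d.Θ 0 0 = 0 ∧
  ∀ t ∈ ball (0 : CS m) d.r,
    (t ∈ M ↔ starRingEnd ℂ t.2 = ThetaSum d.Θ (conjW t.1) t)

/-- The Segre variety `S_{q̄}` of a point `q`, inside the polydisc of radius
`r`: `S_{q̄} = {(w, z) : z = Σ_β w^β conj(Θ_β(q))}`. -/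
def segreVariety (Θ : (Fin m → ℕ) → CS m → ℂ) (r : ℝ) (q : CS m) : Set (CS m) :=
  {t ∈ ball (0 : CS m) r |
    t.2 = ∑' β : Fin m → ℕ, mpow t.1 β * starRingEnd ℂ (Θ β q)}

/-- The reflection function `R'_h(t, ν̄') = μ̄' - Σ_β λ̄'^β Θ'_β(h(t))` extends
holomorphically to a neighborhood of `(p, p̄')` in `ℂⁿ × ℂⁿ`. -/
def ReflectionExtendsAt (Θ : (Fin m → ℕ) → CS m → ℂ) (h : CS m → CS m)
    (M : Set (CS m)) (p p' : CS m) : Prop :=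
  ∃ r > (0 : ℝ), ∃ R : CS m × CS m → ℂ,
    DifferentiableOn ℂ R (ball p r ×ˢ ball (conjCS p') r) ∧
    ∀ t ∈ M ∩ ball p r, ∀ ν ∈ ball (conjCS p') r,
      R (t, ν) = ν.2 - ∑' β : Fin m → ℕ, mpow ν.1 β * Θ β (h t)

/-- All the components `Θ_β ∘ h` of the reflection function extend
holomorphically to a common neighborhood of `q`, with uniform Cauchy
estimates `|Θ_β(h(t))| < C^{|β|+1}`; i.e. the reflection function is real
analytic at `q`. -/
def ReflectionAnalyticAt (Θ : (Fin m → ℕ) → CS m → ℂ) (h : CS m → CS m)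
    (M : Set (CS m)) (q : CS m) : Prop :=
  ∃ r C : ℝ, 0 < r ∧ 0 < C ∧ ∃ φ : (Fin m → ℕ) → CS m → ℂ,
    (∀ β, DifferentiableOn ℂ (φ β) (ball q r)) ∧
    (∀ β, ∀ t ∈ M ∩ ball q r, φ β t = Θ β (h t)) ∧
    ∀ β, ∀ t ∈ ball q r, ‖φ β t‖ < C ^ (mdeg β + 1)

end Series

section Jets

variable {m : ℕ}

/-- Partial derivative in the direction of the `i`-th `w`-coordinate. -/
def pderivW (i : Fin m) (f : CS m → ℂ) : CS m → ℂ :=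
  fun t => fderiv ℂ f t (Pi.single i 1, 0)

def pderivList : List (Fin m) → (CS m → ℂ) → CS m → ℂ
  | [], f => f
  | i :: L, f => pderivW i (pderivList L f)

def indexList (β : Fin m → ℕ) : List (Fin m) :=
  (List.finRange m).flatMap fun i => List.replicate (β i) i

/-- The iterated partial derivative `∂_w^β f`. -/
def pderivMulti (β : Fin m → ℕ) (f : CS m → ℂ) : CS m → ℂ :=
  pderivList (indexList β) f

/-- The morphism of `k`-jets of Segre varieties
`φ'_k : (t', τ') ↦ (t', (∂^β_{w'}[z' − Θ̄'(w', τ')](t'))_{|β| ≤ k})`, written in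
the holomorphic parametrization `(t, ζ) ↦ (t, (ζ, Θ(ζ, t)))` of the extrinsic
complexification `M^c`. -/
def segreJetMap (Θ : (Fin m → ℕ) → CS m → ℂ) (k : ℕ) :
    CS m × (Fin m → ℂ) → CS m × ((Fin m → Fin (k + 1)) → ℂ) :=
  fun p =>
    (p.1, fun β =>
      if mdeg (fun i => (β i : ℕ)) ≤ k then
        pderivMulti (fun i => (β i : ℕ))
          (fun s => s.2 - ThetaBar Θ s.1 (p.2, ThetaSum Θ p.2 p.1)) p.1
      else 0)

/-- The rank of the differential of a map at a point. -/
def mapRankAt {X Y : Type*} [NormedAddCommGroup X] [NormedSpace ℂ X]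
    [NormedAddCommGroup Y] [NormedSpace ℂ Y] (f : X → Y) (p : X) : ℕ :=
  Module.finrank ℂ (LinearMap.range (fderiv ℂ f p).toLinearMap)

/-- Parameter domain for the complexification. -/
def segreDomain (m : ℕ) (r : ℝ) : Set (CS m × (Fin m → ℂ)) :=
  {p | ‖p.1‖ < r ∧ ‖p.2‖ < r}

/-- The morphism of `k`-jets of Segre varieties has generic rank `ρ`. -/
def SegreGenericRank (Θ : (Fin m → ℕ) → CS m → ℂ) (r : ℝ) (k ρ : ℕ) : Prop :=
  (∀ p ∈ segreDomain m r, mapRankAt (segreJetMap Θ k) p ≤ ρ) ∧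
  ∃ p ∈ segreDomain m r, mapRankAt (segreJetMap Θ k) p = ρ

/-- The `k`-jet morphism has locally constant rank `ρ` in a neighborhood of the
point of the complexification corresponding to `(q, q̄)`. -/
def SegreConstRankNear (Θ : (Fin m → ℕ) → CS m → ℂ) (k ρ : ℕ) (q : CS m) : Prop :=
  ∀ᶠ p in 𝓝 (q, conjW q.1), mapRankAt (segreJetMap Θ k) p = ρ

/-- Normal form of a defining series with respect to the splitting
`t' = (w', v', z') ∈ ℂ^a × ℂ^{m-a} × ℂ`: the series involves no `v̄'` and its
coefficients are independent of `v'`. -/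
def NormalFormSeries (a : ℕ) (Θ : (Fin m → ℕ) → CS m → ℂ) : Prop :=
  (∀ β : Fin m → ℕ, (∃ i : Fin m, a ≤ (i : ℕ) ∧ β i ≠ 0) → Θ β = 0) ∧
  ∀ β, ∀ s t : CS m, (∀ i : Fin m, (i : ℕ) < a → s.1 i = t.1 i) → s.2 = t.2 →
    Θ β s = Θ β t

def extendIdx (m a : ℕ) (β : Fin a → ℕ) : Fin m → ℕ :=
  fun i => if h : (i : ℕ) < a then β ⟨i, h⟩ else 0

def embedCS (m a : ℕ) (t : CS a) : CS m :=
  ((fun i => if h : (i : ℕ) < a then t.1 ⟨i, h⟩ else 0), t.2)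

/-- The defining series of the reduced hypersurface `M̲' ⊆ ℂ^{a+1}` underlying
a series in normal form. -/
def reducedSeries (m a : ℕ) (Θ : (Fin m → ℕ) → CS m → ℂ) :
    (Fin a → ℕ) → CS a → ℂ :=
  fun β t => Θ (extendIdx m a β) (embedCS m a t)

end Jets

/-!
STATEMENT 17 (Lemma 7.2). Setting of the proof of Theorem 4.3: `M` is given
near `p₁ = 0` as the graph `{Im z = ρ(w, Re z)}` of a real analytic function
`ρ` with `ρ(0) = 0`, `dρ(0) = 0`, in normal coordinates (`ρ(w, 0, x) ≡ 0`,
encoded on the defining series `d` of `M` by `Θ_0(t) = z` and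
`Θ_β((0, z)) = 0` for `β ≠ 0`; in particular `S_{0̄} = {z = 0}`), and
`D = M⁻ = {Im z < ρ(w, Re z)}`.  Let `H₁ = {ψ₁ = 0}` be a `C^∞` hypersurface
transverse to `M` at `0` (chosen independent of `Im z`), with
`H₁ ∩ M = M₁` and `H₁⁻ ∩ M = M₁⁻`, `H₁⁻ = {ψ₁ < 0}`.  If the Segre variety
`S_{0̄}` of the origin satisfies `S_{0̄} ∩ H₁⁻ ⊆ M⁺` (it lies above `M` over
`M₁⁻`), then the origin lies in the lower side `Σ_{γ}⁻` of the Levi-flat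
hypersurface `Σ_γ = ⋃_{q ∈ γ} S_q̄` for every arc `γ ⊂⊂ M₁⁻`: every point of
`Σ_γ` lying over `(w, x) = (0, 0)` lies strictly above the origin.
-/
theorem origin_lies_in_lower_side_of_levi_flat_hat
    (m : ℕ) (hm : 1 ≤ m) (M : Set (CS m))
    (hM : IsRealAnalyticHypersurface M)
    (d : DefData m) (hd : d.IsDefiningSeriesOf M)
    -- graph representation `M = {Im z = ρ(w, Re z)}` near `0`
    (ρ : (Fin m → ℂ) × ℝ → ℝ)
    (hρan : AnalyticOnNhd ℝ ρ {x : (Fin m → ℂ) × ℝ | ‖x.1‖ < d.r ∧ |x.2| < d.r})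
    (hρ0 : ρ 0 = 0) (hdρ0 : fderiv ℝ ρ 0 = 0)
    (hgraph : ∀ t ∈ ball (0 : CS m) d.r,
      (t ∈ M ↔ t.2.im = ρ (t.1, t.2.re)))
    -- normal coordinates: `ρ(w, 0, x) ≡ 0`, i.e. `Θ_0(t) = z` and
    -- `Θ_β(0, z) = 0` for `β ≠ 0`
    (hnormal0 : ∀ t : CS m, d.Θ 0 t = t.2)
    (hnormal1 : ∀ β : Fin m → ℕ, β ≠ 0 → ∀ z : ℂ,
      d.Θ β ((0 : Fin m → ℂ), z) = 0)
    -- the transverse hypersurface `H₁ = {ψ₁ = 0}`, independent of `Im z`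
    (ψ₁ : CS m → ℝ) (hψ₁ : ContDiff ℝ (⊤ : ℕ∞) ψ₁) (hψ₁0 : ψ₁ 0 = 0)
    (hψ₁trans : ∃ v : CS m, TangentAt M 0 v ∧ fderiv ℝ ψ₁ 0 v ≠ 0)
    (hψ₁vert : ∀ (w : Fin m → ℂ) (z z' : ℂ), z.re = z'.re →
      ψ₁ (w, z) = ψ₁ (w, z'))
    -- Case III: `S_{0̄} ∩ H₁⁻ ⊆ M⁺`
    (hcaseIII : ∀ t ∈ segreVariety d.Θ d.r (0 : CS m), ψ₁ t < 0 →
      ρ (t.1, t.2.re) < t.2.im)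
    -- an arbitrary arc `γ ⊂⊂ M₁⁻`
    (γ : ℝ → CS m)
    (hγ : ∀ s ∈ Icc (-(2 * d.r)) (2 * d.r),
      γ s ∈ M ∩ ball (0 : CS m) d.r ∧ ψ₁ (γ s) < 0) :
    -- conclusion: `0` lies in the lower side of `Σ_γ`: every point of `Σ_γ`
    -- over `(w, x) = (0, 0)` has `y > 0`
    ∀ s ∈ Icc (-(2 * d.r)) (2 * d.r), ∀ y : ℝ,
      ((0 : Fin m → ℂ), Complex.I * (y : ℂ)) ∈ segreVariety d.Θ d.r (γ s) →
      0 < y := by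
  intro s hs y hy
  obtain ⟨⟨hqM, hqball⟩, hqψ⟩ := hγ s hs
  obtain ⟨hball, heq⟩ := hy
  -- evaluate the Segre series at w = 0
  have hsum : (∑' β : Fin m → ℕ, mpow (0 : Fin m → ℂ) β * starRingEnd ℂ (d.Θ β (γ s)))
      = starRingEnd ℂ ((γ s).2) := by
    rw [tsum_eq_single (0 : Fin m → ℕ)]
    · simp [mpow, hnormal0]
    · intro β hβ
      obtain ⟨i, hi⟩ : ∃ i, β i ≠ 0 := by
        by_contra h
        push_neg at h
        exact hβ (funext h)
      have hz : mpow (0 : Fin m → ℂ) β = 0 :=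
        Finset.prod_eq_zero (Finset.mem_univ i) (by simp [zero_pow hi])
      simp [hz]
  have hq2 : (γ s).2 = starRingEnd ℂ (Complex.I * (y : ℂ)) := by
    have heq' : Complex.I * (y : ℂ)
        = ∑' β : Fin m → ℕ, mpow (0 : Fin m → ℂ) β * starRingEnd ℂ (d.Θ β (γ s)) := heq
    have h1 := heq'.trans hsum
    have := congrArg (starRingEnd ℂ) h1
    simpa using this.symm
  have hre : (γ s).2.re = 0 := by simp [hq2]
  have him : (γ s).2.im = -y := by simp [hq2]
  -- the point (q₁, 0) lies on the Segre variety of the origin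
  have htball : ((γ s).1, (0 : ℂ)) ∈ ball (0 : CS m) d.r := by
    rw [mem_ball_zero_iff] at hqball ⊢
    calc ‖(((γ s).1, (0 : ℂ)) : CS m)‖ ≤ ‖γ s‖ := by
          rw [Prod.norm_def, Prod.norm_def]
          simp [le_max_left]
      _ < d.r := hqball
  have htseg : (((γ s).1, (0 : ℂ)) : CS m) ∈ segreVariety d.Θ d.r (0 : CS m) := by
    refine ⟨htball, ?_⟩
    have hzero : ∀ β : Fin m → ℕ,
        mpow (γ s).1 β * starRingEnd ℂ (d.Θ β (0 : CS m)) = 0 := by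
      intro β
      by_cases hβ : β = 0
      · subst hβ
        have : d.Θ 0 (0 : CS m) = (0 : CS m).2 := hnormal0 0
        simp [this]
      · have : d.Θ β (0 : CS m) = 0 := hnormal1 β hβ 0
        simp [this]
    simp [tsum_congr hzero]
  -- ψ₁ at that point equals ψ₁ at γ s
  have hψt : ψ₁ ((γ s).1, (0 : ℂ)) < 0 := by
    have := hψ₁vert (γ s).1 (0 : ℂ) ((γ s).2) (by simp [hre])
    rw [this]
    exact hqψ
  have hρneg : ρ ((γ s).1, (0 : ℝ)) < 0 := by
    have := hcaseIII _ htseg hψt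
    simpa using this
  have hgr := (hgraph (γ s) hqball).1 hqM
  rw [hre] at hgr
  rw [him] at hgr
  linarith
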